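/- Theorem 1, Part 2 (leader optimality of the backward–forward construction): Suppose θ satisfies both the follower fixed-point condition and the leader fixed-point condition at (n,π,z) for every n ∈ {1,…,T} and all probability vectors π on 𝒳ˡ and z on 𝒳ᶠ. Then for every t ∈ {1,…,T}, every (π, z, xˡ), every family of leader deviation kernels σˡ = (σˡ_n)_{n=t}^T — where σˡ_n maps each realized action history aˡ_{t:n−1} and current state xˡ_n to a probability vector on 𝒜ˡ, inducing at each realized action history a leader prescription γ̂ˡ_n := σˡ_n(·|aˡ_{t:n−1}, ·) — and every choice, at each time n and realized action history, of follower prescriptions γ̂ᶠ_n ∈ B̄R_n(π_n, z_n, γ̂ˡ_n): V^l_t(π,z,xˡ) ≥ E[ Σ_{n=t}^T δ^{n−t} Rˡ(z_n, Xˡ_n, Aˡ_n) ], where the expectation is over the leader deviation process started from (t,π,z,xˡ): π_t = π, z_t = z, Xˡ_t = xˡ, and for n = t,…,T: Aˡ_n ∼ γ̂ˡ_n(·|Xˡ_n), π_{n+1} = F(π_n,z_n,γ̂ˡ_n,Aˡ_n), z_{n+1} = φ(π_n,z_n,γ̂ˡ_n,γ̂ᶠ_n), Xˡ_{n+1} ∼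 Qˡ(·|z_n,Xˡ_n,Aˡ_n). Combined with Lemma l1, the θ-induced leader strategy attains expected discounted leader reward V^l_t(π,z,xˡ), which is maximal among such deviations with followers best responding. -/
import Mathlib


open scoped Classical

/-- A probability vector on a finite type `S`. -/
def IsProbVec {S : Type*} [Fintype S] (p : S → ℝ) : Prop :=
  (∀ s, 0 ≤ p s) ∧ ∑ s, p s = 1

section MFG

variable {Xl Al Xf Af : Type*} [Fintype Xl] [Fintype Al] [Fintype Xf] [Fintype Af]

/-- Belief update `F(π,z,γˡ,aˡ)`, set to the uniform distribution when the
denominator vanishes. -/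
noncomputable def Fupd (Ql : (Xf → ℝ) → Xl → Al → Xl → ℝ)
    (π : Xl → ℝ) (z : Xf → ℝ) (γl : Xl → Al → ℝ) (al : Al) : Xl → ℝ :=
  if 0 < ∑ x, π x * γl x al then
    fun x' => (∑ x, π x * γl x al * Ql z x al x') / (∑ x, π x * γl x al)
  else
    fun _ => 1 / (Fintype.card Xl : ℝ)

/-- Mean-field (Fokker–Planck) update `φ(π,z,γˡ,γᶠ)`. -/
def phi (Qf : (Xf → ℝ) → Xl → Xf → Al → Af → Xf → ℝ)
    (π : Xl → ℝ) (z : Xf → ℝ) (γl : Xl → Al → ℝ) (γf : Xf → Af → ℝ) (x' : Xf) : ℝ :=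
  ∑ xf, ∑ xl, ∑ al, ∑ af, z xf * π xl * γf xf af * γl xl al * Qf z xl xf al af x'

variable (Ql : (Xf → ℝ) → Xl → Al → Xl → ℝ)
  (Qf : (Xf → ℝ) → Xl → Xf → Al → Af → Xf → ℝ)
  (Rf : (Xf → ℝ) → Xl → Xf → Al → Af → ℝ)
  (Rl : (Xf → ℝ) → Xl → Al → ℝ)
  (δ : ℝ)
  (θ : ℕ → (Xl → ℝ) → (Xf → ℝ) → (Xl → Al → ℝ) × (Xf → Af → ℝ))

/-- Follower value function of the backward recursion: `Vf k t π z xf` is the value `V^f_t`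
when `k` stages remain (so `V^f_t = Vf (T+1-t) t` and `Vf 0 = V^f_{T+1} ≡ 0`). -/
noncomputable def Vf : ℕ → ℕ → (Xl → ℝ) → (Xf → ℝ) → Xf → ℝ
  | 0, _, _, _, _ => 0
  | k + 1, t, π, z, xf =>
    ∑ xl, ∑ al, ∑ af, ∑ x',
      π xl * (θ t π z).1 xl al * (θ t π z).2 xf af * Qf z xl xf al af x' *
        (Rf z xl xf al af +
          δ * Vf k (t + 1) (Fupd Ql π z (θ t π z).1 al)
                (phi Qf π z (θ t π z).1 (θ t π z).2) x')

/-- Leader value function of the backward recursion: `Vl k t π z xl` is `V^l_t`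
when `k` stages remain. -/
noncomputable def Vl : ℕ → ℕ → (Xl → ℝ) → (Xf → ℝ) → Xl → ℝ
  | 0, _, _, _, _ => 0
  | k + 1, t, π, z, xl =>
    ∑ al, ∑ x',
      (θ t π z).1 xl al * Ql z xl al x' *
        (Rl z xl al +
          δ * Vl k (t + 1) (Fupd Ql π z (θ t π z).1 al)
                (phi Qf π z (θ t π z).1 (θ t π z).2) x')

/-- Expected total discounted follower reward of the θ-induced follower process,
conditioned on the current joint state: `Ef k t π z xl xf` is
`E[ Σ_{n=t}^{t+k-1} δ^{n-t} Rᶠ(z_n,Xˡ_n,Xᶠ_n,Aˡ_n,Aᶠ_n) | Xˡ_t = xl, Xᶠ_t = xf ]`,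
where beliefs update by `F` and the mean field by `φ` under the equilibrium prescriptions.
The unconditional expectation started from `(t,π,z,xf)` is `∑ xl, π xl * Ef k t π z xl xf`. -/
noncomputable def Ef : ℕ → ℕ → (Xl → ℝ) → (Xf → ℝ) → Xl → Xf → ℝ
  | 0, _, _, _, _, _ => 0
  | k + 1, t, π, z, xl, xf =>
    ∑ al, ∑ af, (θ t π z).1 xl al * (θ t π z).2 xf af *
      (Rf z xl xf al af +
        δ * ∑ xl', ∑ xf', Ql z xl al xl' * Qf z xl xf al af xf' *
          Ef k (t + 1) (Fupd Ql π z (θ t π z).1 al)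
            (phi Qf π z (θ t π z).1 (θ t π z).2) xl' xf')

/-- Expected total discounted leader reward of the θ-induced leader process started from
`(t, π, z, xl)`, with `k` stages remaining. -/
noncomputable def El : ℕ → ℕ → (Xl → ℝ) → (Xf → ℝ) → Xl → ℝ
  | 0, _, _, _, _ => 0
  | k + 1, t, π, z, xl =>
    ∑ al, (θ t π z).1 xl al *
      (Rl z xl al +
        δ * ∑ xl', Ql z xl al xl' *
          El k (t + 1) (Fupd Ql π z (θ t π z).1 al)
            (phi Qf π z (θ t π z).1 (θ t π z).2) xl')

/-- The follower one-step objective `J_t(γ; π,z,γˡ,γᶠ,xᶠ)`, with `k` the number of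
remaining stages after time `t` (so the continuation value is `V^f_{t+1} = Vf k (t+1)`). -/
noncomputable def Jf (k t : ℕ) (π : Xl → ℝ) (z : Xf → ℝ)
    (γl : Xl → Al → ℝ) (γf : Xf → Af → ℝ) (xf : Xf) (γ : Af → ℝ) : ℝ :=
  ∑ xl, ∑ al, ∑ af, ∑ x',
    π xl * γl xl al * γ af * Qf z xl xf al af x' *
      (Rf z xl xf al af +
        δ * Vf Ql Qf Rf δ θ k (t + 1) (Fupd Ql π z γl al) (phi Qf π z γl γf) x')

/-- `θ` satisfies the follower fixed-point condition at `(t,π,z)` (horizon `T`): for every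
`xᶠ` the row `γ̃ᶠ_t(·|xᶠ)` maximizes `γ ↦ J_t(γ; π,z,γ̃ˡ_t,γ̃ᶠ_t,xᶠ)` over probability
vectors on `Af`. -/
def FollowerFP (T t : ℕ) (π : Xl → ℝ) (z : Xf → ℝ) : Prop :=
  ∀ xf : Xf, ∀ γ : Af → ℝ, IsProbVec γ →
    Jf Ql Qf Rf δ θ (T - t) t π z (θ t π z).1 (θ t π z).2 xf γ ≤
      Jf Ql Qf Rf δ θ (T - t) t π z (θ t π z).1 (θ t π z).2 xf ((θ t π z).2 xf)

/-- `γᶠ ∈ B̄R_t(π,z,γˡ)`: the set of follower prescriptions whose every row maximizes the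
one-step objective `J_t(·; π,z,γˡ,γᶠ,xᶠ)` (with `φ` evaluated at `γᶠ` itself), `k` being
the number of remaining stages after `t`. -/
def BRbar (k t : ℕ) (π : Xl → ℝ) (z : Xf → ℝ)
    (γl : Xl → Al → ℝ) (γf : Xf → Af → ℝ) : Prop :=
  (∀ xf, IsProbVec (γf xf)) ∧
    ∀ xf : Xf, ∀ γ : Af → ℝ, IsProbVec γ →
      Jf Ql Qf Rf δ θ k t π z γl γf xf γ ≤ Jf Ql Qf Rf δ θ k t π z γl γf xf (γf xf)

/-- Leader one-step objective: one-step expected reward plus discounted continuation value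
`V^l_{t+1} = Vl k (t+1)` from the prescription pair `(γˡ,γᶠ)` at `(t,π,z)`. -/
noncomputable def Ll (k t : ℕ) (π : Xl → ℝ) (z : Xf → ℝ)
    (γl : Xl → Al → ℝ) (γf : Xf → Af → ℝ) (xl : Xl) : ℝ :=
  ∑ al, ∑ x',
    γl xl al * Ql z xl al x' *
      (Rl z xl al +
        δ * Vl Ql Qf Rl δ θ k (t + 1) (Fupd Ql π z γl al) (phi Qf π z γl γf) x')

/-- `θ` satisfies the leader fixed-point condition at `(t,π,z)` (horizon `T`):
`γ̃ᶠ_t ∈ B̄R_t(π,z,γ̃ˡ_t)`, and the equilibrium pair dominates every leader prescription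
`γˡ` paired with any one-step best response `γ̂ᶠ ∈ B̄R_t(π,z,γˡ)`. -/
def LeaderFP (T t : ℕ) (π : Xl → ℝ) (z : Xf → ℝ) : Prop :=
  BRbar Ql Qf Rf δ θ (T - t) t π z (θ t π z).1 (θ t π z).2 ∧
    ∀ xl : Xl, ∀ γl : Xl → Al → ℝ, (∀ x, IsProbVec (γl x)) →
      ∀ γf : Xf → Af → ℝ, BRbar Ql Qf Rf δ θ (T - t) t π z γl γf →
        Ll Ql Qf Rl δ θ (T - t) t π z γl γf xl ≤
          Ll Ql Qf Rl δ θ (T - t) t π z (θ t π z).1 (θ t π z).2 xl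

/-- Expected total discounted follower reward of the deviation process in which the
follower draws `Aᶠ_n ∼ σᶠ_n(·| Aˡ_{t:n-1}, Xᶠ_{t:n})` (a function of the realized leader
action history `hA` and own state history `hX ++ [xf]`), while all other dynamics —
including the belief and mean-field updates with the equilibrium prescriptions
`θ_n[π_n,z_n]` — are unchanged; conditioned on `Xˡ_n = xl`, `Xᶠ_n = xf`. -/
noncomputable def EfDev (σf : ℕ → List Al → List Xf → Af → ℝ) :
    ℕ → ℕ → (Xl → ℝ) → (Xf → ℝ) → Xl → Xf → List Al → List Xf → ℝ
  | 0, _, _, _, _, _, _, _ => 0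
  | k + 1, t, π, z, xl, xf, hA, hX =>
    ∑ al, ∑ af, (θ t π z).1 xl al * σf t hA (hX ++ [xf]) af *
      (Rf z xl xf al af +
        δ * ∑ xl', ∑ xf', Ql z xl al xl' * Qf z xl xf al af xf' *
          EfDev σf k (t + 1) (Fupd Ql π z (θ t π z).1 al)
            (phi Qf π z (θ t π z).1 (θ t π z).2) xl' xf' (hA ++ [al]) (hX ++ [xf]))

/-- The pair of beliefs `(π_n, z_n)` realized along a leader deviation: starting at time `n`
with realized action-history prefix `pre` and beliefs `(π,z)`, process the remaining
realized actions, updating by `F` and `φ` with the deviating leader prescriptions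
`σˡ_m(·|pre, ·)` and the chosen follower prescriptions `Γᶠ_m(pre)`. -/
noncomputable def devPair (σl : ℕ → List Al → Xl → Al → ℝ)
    (Γf : ℕ → List Al → Xf → Af → ℝ) :
    ℕ → List Al → (Xl → ℝ) → (Xf → ℝ) → List Al → ((Xl → ℝ) × (Xf → ℝ))
  | _, _, π, z, [] => (π, z)
  | n, pre, π, z, a :: rest =>
    devPair σl Γf (n + 1) (pre ++ [a])
      (Fupd Ql π z (σl n pre) a) (phi Qf π z (σl n pre) (Γf n pre)) rest

/-- Expected total discounted leader reward of the leader deviation process: at each time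
`n` with realized action history `hA`, the leader plays `Aˡ_n ∼ σˡ_n(·|hA, Xˡ_n)` and the
followers play the chosen prescription `Γᶠ_n(hA)`, with `π_{n+1} = F(π_n,z_n,σˡ_n,Aˡ_n)`,
`z_{n+1} = φ(π_n,z_n,σˡ_n,Γᶠ_n)` and `Xˡ_{n+1} ∼ Qˡ(·|z_n,Xˡ_n,Aˡ_n)`. -/
noncomputable def ElDev (σl : ℕ → List Al → Xl → Al → ℝ)
    (Γf : ℕ → List Al → Xf → Af → ℝ) :
    ℕ → ℕ → List Al → (Xl → ℝ) → (Xf → ℝ) → Xl → ℝ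
  | 0, _, _, _, _, _ => 0
  | k + 1, n, hA, π, z, xl =>
    ∑ al, σl n hA xl al *
      (Rl z xl al +
        δ * ∑ xl', Ql z xl al xl' *
          ElDev σl Γf k (n + 1) (hA ++ [al])
            (Fupd Ql π z (σl n hA) al) (phi Qf π z (σl n hA) (Γf n hA)) xl')

end MFG

section AuxLemmas

variable {Xl Al Xf Af : Type*} [Fintype Xl] [Fintype Al] [Fintype Xf] [Fintype Af]

lemma isProbVec_Fupd [Nonempty Xl] (Ql : (Xf → ℝ) → Xl → Al → Xl → ℝ)
    (hQl : ∀ z xl al, IsProbVec (Ql z xl al))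
    (π : Xl → ℝ) (hπ : IsProbVec π) (z : Xf → ℝ) (γl : Xl → Al → ℝ)
    (hγ : ∀ x, IsProbVec (γl x)) (al : Al) :
    IsProbVec (Fupd Ql π z γl al) := by
  unfold Fupd
  split_ifs with h
  · constructor
    · intro x'
      apply div_nonneg _ h.le
      exact Finset.sum_nonneg fun x _ =>
        mul_nonneg (mul_nonneg (hπ.1 x) ((hγ x).1 al)) ((hQl z x al).1 x')
    · rw [← Finset.sum_div, Finset.sum_comm]
      have : ∀ x ∈ (Finset.univ : Finset Xl),
          ∑ x' : Xl, π x * γl x al * Ql z x al x' = π x * γl x al := by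
        intro x _
        rw [← Finset.mul_sum, (hQl z x al).2, mul_one]
      rw [Finset.sum_congr rfl this]
      exact div_self (ne_of_gt h)
  · constructor
    · intro _; positivity
    · rw [Finset.sum_const, Finset.card_univ, nsmul_eq_mul, mul_one_div, div_self]
      exact_mod_cast Fintype.card_ne_zero

lemma isProbVec_phi (Qf : (Xf → ℝ) → Xl → Xf → Al → Af → Xf → ℝ)
    (hQf : ∀ z xl xf al af, IsProbVec (Qf z xl xf al af))
    (π : Xl → ℝ) (hπ : IsProbVec π) (z : Xf → ℝ) (hz : IsProbVec z)
    (γl : Xl → Al → ℝ) (hγl : ∀ x, IsProbVec (γl x))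
    (γf : Xf → Af → ℝ) (hγf : ∀ x, IsProbVec (γf x)) :
    IsProbVec (phi Qf π z γl γf) := by
  constructor
  · intro x'
    unfold phi
    refine Finset.sum_nonneg fun xf _ => Finset.sum_nonneg fun xL _ =>
      Finset.sum_nonneg fun al _ => Finset.sum_nonneg fun af _ => ?_
    exact mul_nonneg (mul_nonneg (mul_nonneg (mul_nonneg (hz.1 xf) (hπ.1 xL))
      ((hγf xf).1 af)) ((hγl xL).1 al)) ((hQf z xL xf al af).1 x')
  · unfold phi
    rw [Finset.sum_comm]
    have h1 : ∀ xf : Xf, ∑ x' : Xf, ∑ xL : Xl, ∑ al, ∑ af,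
        z xf * π xL * γf xf af * γl xL al * Qf z xL xf al af x' = z xf := by
      intro xf
      rw [Finset.sum_comm]
      have h2 : ∀ xL : Xl, ∑ x' : Xf, ∑ al, ∑ af,
          z xf * π xL * γf xf af * γl xL al * Qf z xL xf al af x' = π xL * z xf := by
        intro xL
        rw [Finset.sum_comm]
        have h3 : ∀ al : Al, ∑ x' : Xf, ∑ af,
            z xf * π xL * γf xf af * γl xL al * Qf z xL xf al af x'
              = γl xL al * (π xL * z xf) := by
          intro al
          rw [Finset.sum_comm]
          have h4 : ∀ af : Af, ∑ x' : Xf,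
              z xf * π xL * γf xf af * γl xL al * Qf z xL xf al af x'
                = γf xf af * (γl xL al * (π xL * z xf)) := by
            intro af
            rw [← Finset.mul_sum, (hQf z xL xf al af).2, mul_one]
            ring
          rw [Finset.sum_congr rfl fun af _ => h4 af, ← Finset.sum_mul, (hγf xf).2,
            one_mul]
        rw [Finset.sum_congr rfl fun al _ => h3 al, ← Finset.sum_mul, (hγl xL).2, one_mul]
      rw [Finset.sum_congr rfl fun xL _ => h2 xL, ← Finset.sum_mul, hπ.2, one_mul]
    rw [Finset.sum_congr rfl fun xf _ => h1 xf, hz.2]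

lemma devPair_snoc (Ql : (Xf → ℝ) → Xl → Al → Xl → ℝ)
    (Qf : (Xf → ℝ) → Xl → Xf → Al → Af → Xf → ℝ)
    (σl : ℕ → List Al → Xl → Al → ℝ) (Γf : ℕ → List Al → Xf → Af → ℝ) :
    ∀ (rest : List Al) (n : ℕ) (pre : List Al) (π : Xl → ℝ) (z : Xf → ℝ) (a : Al),
    devPair Ql Qf σl Γf n pre π z (rest ++ [a]) =
      (Fupd Ql (devPair Ql Qf σl Γf n pre π z rest).1
          (devPair Ql Qf σl Γf n pre π z rest).2 (σl (n + rest.length) (pre ++ rest)) a,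
       phi Qf (devPair Ql Qf σl Γf n pre π z rest).1
          (devPair Ql Qf σl Γf n pre π z rest).2 (σl (n + rest.length) (pre ++ rest))
          (Γf (n + rest.length) (pre ++ rest)))
  | [], n, pre, π, z, a => by simp [devPair]
  | b :: rest, n, pre, π, z, a => by
    rw [List.cons_append, devPair,
      devPair_snoc Ql Qf σl Γf rest (n + 1) (pre ++ [b])
        (Fupd Ql π z (σl n pre) b) (phi Qf π z (σl n pre) (Γf n pre)) a,
      devPair]
    have hn : n + 1 + rest.length = n + (b :: rest).length := by
      simp [List.length_cons]; omega
    have hp : pre ++ [b] ++ rest = pre ++ b :: rest := by simp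
    rw [hn, hp]

lemma Ll_as_sum (Ql : (Xf → ℝ) → Xl → Al → Xl → ℝ)
    (hQl : ∀ z xl al, IsProbVec (Ql z xl al))
    (Qf : (Xf → ℝ) → Xl → Xf → Al → Af → Xf → ℝ)
    (Rl : (Xf → ℝ) → Xl → Al → ℝ) (δ : ℝ)
    (θ : ℕ → (Xl → ℝ) → (Xf → ℝ) → (Xl → Al → ℝ) × (Xf → Af → ℝ))
    (k n : ℕ) (π : Xl → ℝ) (z : Xf → ℝ)
    (γl : Xl → Al → ℝ) (γf : Xf → Af → ℝ) (xl : Xl) :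
    Ll Ql Qf Rl δ θ k n π z γl γf xl =
      ∑ al, γl xl al * (Rl z xl al + δ * ∑ x', Ql z xl al x' *
        Vl Ql Qf Rl δ θ k (n + 1) (Fupd Ql π z γl al) (phi Qf π z γl γf) x') := by
  unfold Ll
  refine Finset.sum_congr rfl fun al _ => ?_
  have : ∀ x' ∈ (Finset.univ : Finset Xl),
      γl xl al * Ql z xl al x' * (Rl z xl al + δ *
        Vl Ql Qf Rl δ θ k (n + 1) (Fupd Ql π z γl al) (phi Qf π z γl γf) x')
      = γl xl al * Rl z xl al * Ql z xl al x' + γl xl al * δ * (Ql z xl al x' *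
        Vl Ql Qf Rl δ θ k (n + 1) (Fupd Ql π z γl al) (phi Qf π z γl γf) x') := by
    intro x' _; ring
  rw [Finset.sum_congr rfl this, Finset.sum_add_distrib, ← Finset.mul_sum,
    ← Finset.mul_sum, (hQl z xl al).2, mul_one]
  ring

end AuxLemmas

/-- Theorem 1, Part 2 (leader optimality of the backward–forward construction): if θ
satisfies the follower and the leader fixed-point conditions everywhere, then
`V^l_t(π,z,xl)` — which by Lemma l1 is the expected discounted leader reward attained by
the θ-induced leader strategy — dominates the expected total discounted leader reward of
every leader deviation process given by history-dependent kernels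
`σˡ_n(·| aˡ_{t:n-1}, xˡ_n)` together with any choice, at each time `n` and realized action
history `hA`, of follower prescriptions `Γᶠ_n(hA) ∈ B̄R_n(π_n, z_n, σˡ_n(·|hA,·))`, where
`(π_n, z_n) = devPair ... t [] π z hA` are the beliefs realized along the deviation. -/
theorem leader_optimality
    {Xl Al Xf Af : Type*} [Fintype Xl] [Fintype Al] [Fintype Xf] [Fintype Af]
    [Nonempty Xl] [Nonempty Al] [Nonempty Xf] [Nonempty Af]
    (Ql : (Xf → ℝ) → Xl → Al → Xl → ℝ) (hQl : ∀ z xl al, IsProbVec (Ql z xl al))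
    (Qf : (Xf → ℝ) → Xl → Xf → Al → Af → Xf → ℝ)
    (hQf : ∀ z xl xf al af, IsProbVec (Qf z xl xf al af))
    (Rf : (Xf → ℝ) → Xl → Xf → Al → Af → ℝ)
    (Rl : (Xf → ℝ) → Xl → Al → ℝ)
    (δ : ℝ) (hδ0 : 0 < δ) (hδ1 : δ ≤ 1)
    (θ : ℕ → (Xl → ℝ) → (Xf → ℝ) → (Xl → Al → ℝ) × (Xf → Af → ℝ))
    (hθ : ∀ t π z, IsProbVec π → IsProbVec z →
      (∀ xl, IsProbVec ((θ t π z).1 xl)) ∧ (∀ xf, IsProbVec ((θ t π z).2 xf)))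
    (T : ℕ) (hT : 1 ≤ T)
    (hFP : ∀ n, 1 ≤ n → n ≤ T → ∀ π z, IsProbVec π → IsProbVec z →
      FollowerFP Ql Qf Rf δ θ T n π z)
    (hLFP : ∀ n, 1 ≤ n → n ≤ T → ∀ π z, IsProbVec π → IsProbVec z →
      LeaderFP Ql Qf Rf Rl δ θ T n π z)
    (t : ℕ) (ht1 : 1 ≤ t) (ht2 : t ≤ T)
    (π : Xl → ℝ) (hπ : IsProbVec π) (z : Xf → ℝ) (hz : IsProbVec z) (xl : Xl)
    (σl : ℕ → List Al → Xl → Al → ℝ) (hσl : ∀ n hA x, IsProbVec (σl n hA x))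
    (Γf : ℕ → List Al → Xf → Af → ℝ)
    (hΓf : ∀ n, t ≤ n → n ≤ T → ∀ hA : List Al, hA.length = n - t →
      BRbar Ql Qf Rf δ θ (T - n) n
        (devPair Ql Qf σl Γf t [] π z hA).1 (devPair Ql Qf σl Γf t [] π z hA).2
        (σl n hA) (Γf n hA)) :
    ElDev Ql Qf Rl δ σl Γf (T + 1 - t) t [] π z xl ≤
      Vl Ql Qf Rl δ θ (T + 1 - t) t π z xl := by
  have hdev : ∀ hA : List Al, t + hA.length ≤ T →
      IsProbVec (devPair Ql Qf σl Γf t [] π z hA).1 ∧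
      IsProbVec (devPair Ql Qf σl Γf t [] π z hA).2 := by
    intro hA
    induction hA using List.reverseRecOn with
    | nil => intro _; exact ⟨hπ, hz⟩
    | append_singleton hA a ih =>
      intro hle
      simp only [List.length_append, List.length_singleton] at hle
      have hP := ih (by omega)
      have hΓ := hΓf (t + hA.length) (by omega) (by omega) hA (by omega)
      rw [devPair_snoc]
      simp only [List.nil_append]
      exact ⟨isProbVec_Fupd Ql hQl _ hP.1 _ _ (hσl _ _) a,
        isProbVec_phi Qf hQf _ hP.1 _ hP.2 _ (hσl _ _) _ hΓ.1⟩
  have main : ∀ k n (hA : List Al), t ≤ n → n + k = T + 1 → hA.length = n - t →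
      ∀ x : Xl,
      ElDev Ql Qf Rl δ σl Γf k n hA (devPair Ql Qf σl Γf t [] π z hA).1
          (devPair Ql Qf σl Γf t [] π z hA).2 x ≤
        Vl Ql Qf Rl δ θ k n (devPair Ql Qf σl Γf t [] π z hA).1
          (devPair Ql Qf σl Γf t [] π z hA).2 x := by
    intro k
    induction k with
    | zero => intro n hA _ _ _ x; simp [ElDev, Vl]
    | succ k ih =>
      intro n hA hn hk hlen x
      set P := devPair Ql Qf σl Γf t [] π z hA with hPdef
      have hnT : n ≤ T := by omega
      have hn1 : 1 ≤ n := le_trans ht1 hn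
      have hlen' : t + hA.length = n := by omega
      have hP := hdev hA (by omega)
      have hsnoc : ∀ a : Al, devPair Ql Qf σl Γf t [] π z (hA ++ [a]) =
          (Fupd Ql P.1 P.2 (σl n hA) a, phi Qf P.1 P.2 (σl n hA) (Γf n hA)) := by
        intro a
        rw [devPair_snoc]
        simp only [List.nil_append]
        rw [hlen']
      have step1 : ElDev Ql Qf Rl δ σl Γf (k + 1) n hA P.1 P.2 x ≤
          Ll Ql Qf Rl δ θ k n P.1 P.2 (σl n hA) (Γf n hA) x := by
        rw [Ll_as_sum Ql hQl]
        simp only [ElDev]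
        apply Finset.sum_le_sum
        intro al _
        have hE : ∀ xl', ElDev Ql Qf Rl δ σl Γf k (n + 1) (hA ++ [al])
            (Fupd Ql P.1 P.2 (σl n hA) al) (phi Qf P.1 P.2 (σl n hA) (Γf n hA)) xl' ≤
            Vl Ql Qf Rl δ θ k (n + 1)
            (Fupd Ql P.1 P.2 (σl n hA) al) (phi Qf P.1 P.2 (σl n hA) (Γf n hA)) xl' := by
          intro xl'
          have h := ih (n + 1) (hA ++ [al]) (by omega) (by omega)
            (by simp [List.length_append]; omega) xl'
          simp only [hsnoc al] at h
          exact h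
        gcongr with xl' _
        · exact (hσl n hA x).1 al
        · exact (hQl P.2 x al).1 xl'
        · exact hE xl'
      have hBR := hΓf n hn hnT hA (by omega)
      have hkeq : T - n = k := by omega
      rw [hkeq] at hBR
      have step2 := (hLFP n hn1 hnT P.1 P.2 hP.1 hP.2).2 x (σl n hA) (hσl n hA)
        (Γf n hA) (by rw [hkeq] at *; exact hBR)
      rw [hkeq] at step2
      have step3 : Ll Ql Qf Rl δ θ k n P.1 P.2 (θ n P.1 P.2).1 (θ n P.1 P.2).2 x =
          Vl Ql Qf Rl δ θ (k + 1) n P.1 P.2 x := by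
        simp [Ll, Vl]
      calc ElDev Ql Qf Rl δ σl Γf (k + 1) n hA P.1 P.2 x
          ≤ Ll Ql Qf Rl δ θ k n P.1 P.2 (σl n hA) (Γf n hA) x := step1
        _ ≤ Ll Ql Qf Rl δ θ k n P.1 P.2 (θ n P.1 P.2).1 (θ n P.1 P.2).2 x := step2
        _ = Vl Ql Qf Rl δ θ (k + 1) n P.1 P.2 x := step3
  have h := main (T + 1 - t) t [] le_rfl (by omega) (by simp) xl
  simpa [devPair] using h
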